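/- Let X be a finite abstract simplicial complex and η an edge of X, and let Sub_η^k(X) denote the k-fold edge subdivision of X along η (subdividing all simplices containing η into k+1 parts, introducing new vertices r₁,…,r_k). Then Sub_η^k(X) equals the result of k successive single edge subdivisions, where the i-th subdivision is performed along the edge {r_{i−1}, t} (with r₀ = s) introducing new vertex r_i. -/
import Mathlib


/-- An abstract simplicial complex: a collection of finite subsets closed under subsets. -/
def IsComplex {V : Type*} (X : Set (Finset V)) : Prop :=
  ∀ σ ∈ X, ∀ τ : Finset V, τ ⊆ σ → τ ∈ X

/-- The link of a face `η` in `X`. -/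
def linkC {V : Type*} [DecidableEq V] (X : Set (Finset V)) (η : Finset V) : Set (Finset V) :=
  {ρ | ρ ∈ X ∧ η ∪ ρ ∈ X ∧ Disjoint η ρ}

/-- The edge subdivision of `X` along the edge `{s, t}`, with new vertex `r`. -/
def edgeSubdiv {V : Type*} [DecidableEq V] (X : Set (Finset V)) (s t r : V) :
    Set (Finset V) :=
  {σ | σ ∈ X ∧ ¬ ({s, t} : Finset V) ⊆ σ} ∪
    {τ | ∃ σ ∈ linkC X {s, t},
      τ = σ ∪ {r} ∨ τ = σ ∪ ({r, s} : Finset V) ∨ τ = σ ∪ ({r, t} : Finset V)}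

/-- The `k`-fold edge subdivision of `X` along `η = {s, t}`, with new vertices
`r 1, …, r k` and the convention `r 0 = s`. -/
def multiSub {V : Type*} [DecidableEq V] (X : Set (Finset V)) (s t : V) (r : ℕ → V)
    (k : ℕ) : Set (Finset V) :=
  {σ | σ ∈ X ∧ ¬ ({s, t} : Finset V) ⊆ σ} ∪
    {τ | ∃ σ ∈ linkC X {s, t},
      (∃ i : ℕ, 1 ≤ i ∧ i ≤ k ∧
        (τ = σ ∪ {r i} ∨ τ = σ ∪ ({r (i - 1), r i} : Finset V))) ∨
        τ = σ ∪ ({r k, t} : Finset V)}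

/-- `k` successive single edge subdivisions: the `i`-th one is performed along the edge
`{r (i-1), t}`, introducing the new vertex `r i`. -/
def iterSub {V : Type*} [DecidableEq V] (X : Set (Finset V)) (t : V) (r : ℕ → V) :
    ℕ → Set (Finset V)
  | 0 => X
  | n + 1 => edgeSubdiv (iterSub X t r n) (r n) t (r (n + 1))

section Aux
variable {V : Type*} [DecidableEq V] {X : Set (Finset V)} {s t : V} {r : ℕ → V} {k : ℕ}

lemma linkC_mem {σ : Finset V} (h : σ ∈ linkC X {s, t}) :
    σ ∈ X ∧ ({s, t} : Finset V) ∪ σ ∈ X ∧ s ∉ σ ∧ t ∉ σ := by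
  obtain ⟨h1, h2, h3⟩ := h
  exact ⟨h1, h2, Finset.disjoint_left.mp h3 (by simp), Finset.disjoint_left.mp h3 (by simp)⟩

variable (hX : IsComplex X) (hst : s ≠ t) (hedge : ({s, t} : Finset V) ∈ X)
  (hr0 : r 0 = s)
  (hrfresh : ∀ i : ℕ, 1 ≤ i → i ≤ k → ∀ σ ∈ X, r i ∉ σ)

include hedge hr0 hst hrfresh in
lemma aux_rnt : ∀ i ≤ k, r i ≠ t := by
  intro i hik
  rcases Nat.eq_zero_or_pos i with h | h
  · subst h; rw [hr0]; exact hst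
  · intro he; exact hrfresh i h hik _ hedge (by simp [he])

include hr0 hrfresh in
lemma aux_rnotmem {σ : Finset V} (hσ : σ ∈ linkC X {s, t}) : ∀ i ≤ k, r i ∉ σ := by
  intro i hik
  rcases Nat.eq_zero_or_pos i with h | h
  · subst h; rw [hr0]; exact (linkC_mem hσ).2.2.1
  · exact hrfresh i h hik _ (linkC_mem hσ).1

include hst hedge hr0 hrfresh in
lemma mem_multiSub_contains {n : ℕ} (hn : n ≤ k) {τ : Finset V}
    (hτ : τ ∈ multiSub X s t r n) (hrn : r n ∈ τ) (htn : t ∈ τ) :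
    ∃ σ ∈ linkC X {s, t}, τ = σ ∪ ({r n, t} : Finset V) := by
  have hrnt := aux_rnt hst hedge hr0 hrfresh
  rcases hτ with ⟨hτX, hns⟩ | ⟨σ, hσ, hcase⟩
  · exfalso
    rcases Nat.eq_zero_or_pos n with h | h
    · subst h; rw [hr0] at hrn
      exact hns (Finset.insert_subset hrn (Finset.singleton_subset_iff.mpr htn))
    · exact hrfresh n h hn _ hτX hrn
  · obtain ⟨hσX, -, hsσ, htσ⟩ := linkC_mem hσ
    rcases hcase with ⟨i, hi1, hin, heq | heq⟩ | heq
    · exfalso; subst heq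
      rcases Finset.mem_union.mp htn with h | h
      · exact htσ h
      · exact hrnt i (hin.trans hn) (Finset.mem_singleton.mp h).symm
    · exfalso; subst heq
      rcases Finset.mem_union.mp htn with h | h
      · exact htσ h
      · rcases Finset.mem_insert.mp h with h | h
        · exact hrnt (i - 1) (by omega) h.symm
        · exact hrnt i (hin.trans hn) ((Finset.mem_singleton.mp h)).symm
    · exact ⟨σ, hσ, heq⟩

include hX hst hedge hr0 hrfresh in
lemma linkC_multiSub {n : ℕ} (hn : n ≤ k) :
    linkC (multiSub X s t r n) ({r n, t} : Finset V) = linkC X {s, t} := by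
  ext ρ
  constructor
  · rintro ⟨hρY, huY, hdisj⟩
    have hrn : r n ∈ ({r n, t} : Finset V) ∪ ρ := by simp
    have ht : t ∈ ({r n, t} : Finset V) ∪ ρ := by simp
    obtain ⟨σ, hσ, heq⟩ := mem_multiSub_contains hst hedge hr0 hrfresh hn huY hrn ht
    obtain ⟨hσX, hunX, hsσ, htσ⟩ := linkC_mem hσ
    have hρσ : ρ ⊆ σ := by
      intro x hx
      have hx' : x ∈ ({r n, t} : Finset V) ∪ ρ := Finset.mem_union_right _ hx
      rw [heq] at hx'
      rcases Finset.mem_union.mp hx' with h | h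
      · exact h
      · exfalso
        exact Finset.disjoint_right.mp hdisj hx h
    refine ⟨hX σ hσX ρ hρσ, hX _ hunX _ (Finset.union_subset_union_right hρσ), ?_⟩
    rw [Finset.disjoint_left]
    intro a ha hb
    rcases Finset.mem_insert.mp ha with h | h
    · subst h; exact hsσ (hρσ hb)
    · rw [Finset.mem_singleton.mp h] at hb; exact htσ (hρσ hb)
  · intro hρ
    obtain ⟨hσX, hunX, hsσ, htσ⟩ := linkC_mem hρ
    have hrσ : r n ∉ ρ := aux_rnotmem hr0 hrfresh hρ n hn
    refine ⟨Or.inl ⟨hσX, fun h => hsσ (h (by simp))⟩, ?_, ?_⟩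
    · right
      exact ⟨ρ, hρ, Or.inr (Finset.union_comm _ _)⟩
    · rw [Finset.disjoint_left]
      intro a ha hb
      rcases Finset.mem_insert.mp ha with h | h
      · subst h; exact hrσ hb
      · rw [Finset.mem_singleton.mp h] at hb; exact htσ hb

include hX hr0 in
lemma multiSub_zero : multiSub X s t r 0 = X := by
  ext τ
  constructor
  · rintro (⟨h1, -⟩ | ⟨σ, hσ, hc⟩)
    · exact h1
    · rcases hc with ⟨i, hi1, hi0, -⟩ | h
      · omega
      · subst h; rw [hr0]
        simpa [Finset.union_comm] using (linkC_mem hσ).2.1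
  · intro hτ
    by_cases hsub : ({s, t} : Finset V) ⊆ τ
    · right
      refine ⟨τ \ {s, t}, ⟨hX τ hτ _ Finset.sdiff_subset, ?_, Finset.disjoint_sdiff⟩,
        Or.inr ?_⟩
      · rwa [Finset.union_sdiff_self_eq_union, Finset.union_eq_right.mpr hsub]
      · rw [hr0, Finset.sdiff_union_self_eq_union, Finset.union_eq_left.mpr hsub]
    · exact Or.inl ⟨hτ, hsub⟩

include hX hst hedge hr0 hrfresh in
lemma multiSub_succ {n : ℕ} (hn : n + 1 ≤ k) :
    multiSub X s t r (n + 1) = edgeSubdiv (multiSub X s t r n) (r n) t (r (n + 1)) := by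
  have hrnt := aux_rnt hst hedge hr0 hrfresh
  have hlink := linkC_multiSub hX hst hedge hr0 hrfresh (show n ≤ k by omega)
  unfold edgeSubdiv
  rw [hlink]
  ext τ
  constructor
  · rintro (⟨hτX, hns⟩ | ⟨σ, hσ, hc⟩)
    · left
      refine ⟨Or.inl ⟨hτX, hns⟩, ?_⟩
      intro hsub
      rcases Nat.eq_zero_or_pos n with h | h
      · subst h; rw [hr0] at hsub; exact hns hsub
      · exact hrfresh n h (by omega) _ hτX (hsub (by simp))
    · obtain ⟨hσX, hunX, hsσ, htσ⟩ := linkC_mem hσ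
      rcases hc with ⟨i, hi1, hin, hcc⟩ | heq
      · rcases Nat.lt_or_ge i (n + 1) with hlt | hge
        · -- i ≤ n : stays in Y, no {r n, t}
          left
          refine ⟨Or.inr ⟨σ, hσ, Or.inl ⟨i, hi1, by omega, hcc⟩⟩, ?_⟩
          intro hsub
          have ht : t ∈ τ := hsub (by simp)
          rcases hcc with heq | heq <;> subst heq
          · rcases Finset.mem_union.mp ht with h | h
            · exact htσ h
            · exact hrnt i (by omega) (Finset.mem_singleton.mp h).symm
          · rcases Finset.mem_union.mp ht with h | h
            · exact htσ h
            · rcases Finset.mem_insert.mp h with h | h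
              · exact hrnt (i - 1) (by omega) h.symm
              · exact hrnt i (by omega) (Finset.mem_singleton.mp h).symm
        · -- i = n + 1 : new simplex
          have : i = n + 1 := by omega
          subst this
          right
          refine ⟨σ, hσ, ?_⟩
          rcases hcc with heq | heq
          · exact Or.inl heq
          · refine Or.inr (Or.inl ?_)
            rw [heq]
            congr 1
            simp only [Nat.add_sub_cancel]
            exact Finset.pair_comm _ _
      · right
        exact ⟨σ, hσ, Or.inr (Or.inr heq)⟩
  · rintro (⟨hτY, hns⟩ | ⟨σ, hσ, hc⟩)
    · rcases hτY with ⟨hτX, hns'⟩ | ⟨σ, hσ, hc⟩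
      · exact Or.inl ⟨hτX, hns'⟩
      · rcases hc with ⟨i, hi1, hin, hcc⟩ | heq
        · exact Or.inr ⟨σ, hσ, Or.inl ⟨i, hi1, by omega, hcc⟩⟩
        · exfalso
          apply hns
          rw [heq]
          exact Finset.subset_union_right
    · refine Or.inr ⟨σ, hσ, ?_⟩
      rcases hc with heq | heq | heq
      · exact Or.inl ⟨n + 1, by omega, le_rfl, Or.inl heq⟩
      · refine Or.inl ⟨n + 1, by omega, le_rfl, Or.inr ?_⟩
        rw [heq]
        congr 1
        simp only [Nat.add_sub_cancel]
        exact Finset.pair_comm _ _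
      · exact Or.inr heq

end Aux

/-- the `k`-fold edge subdivision `Sub_η^k(X)` equals the result of `k`
successive single edge subdivisions, the `i`-th along `{r_{i-1}, t}` with new vertex
`r_i` (where `r 0 = s`). -/
theorem multiSub_eq_iterSub {V : Type*} [DecidableEq V] (X : Set (Finset V))
    (hX : IsComplex X) (hfin : X.Finite) (s t : V) (hst : s ≠ t)
    (hedge : ({s, t} : Finset V) ∈ X) (k : ℕ) (r : ℕ → V) (hr0 : r 0 = s)
    (hrfresh : ∀ i : ℕ, 1 ≤ i → i ≤ k → ∀ σ ∈ X, r i ∉ σ)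
    (hrinj : ∀ i ≤ k, ∀ j ≤ k, r i = r j → i = j) :
    multiSub X s t r k = iterSub X t r k := by
  have main : ∀ n, n ≤ k → multiSub X s t r n = iterSub X t r n := by
    intro n
    induction n with
    | zero => intro _; exact multiSub_zero hX hr0
    | succ m ih =>
      intro hm
      have hit : iterSub X t r (m + 1) = edgeSubdiv (iterSub X t r m) (r m) t (r (m + 1)) :=
        rfl
      rw [hit, ← ih (by omega), ← multiSub_succ hX hst hedge hr0 hrfresh hm]
  exact main k le_rfl
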